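/- Let g be the 3-dimensional real Lie algebra with basis e₁, e₂, e₃ and brackets [e₁,e₃] = e₁, [e₂,e₃] = e₁ + e₂, [e₁,e₂] = 0. Then the product Lie algebra g × g admits no integrable complex structure. -/

import Mathlib

/-- Componentwise bracket on the product. -/
instance prodBracket {L : Type*} [LieRing L] : Bracket (L × L) (L × L) :=
  ⟨fun x y => (⁅x.1, y.1⁆, ⁅x.2, y.2⁆)⟩

instance prodLieRing {L : Type*} [LieRing L] : LieRing (L × L) where
  add_lie x y z := by ext <;> simp [Bracket.bracket]
  lie_add x y z := by ext <;> simp [Bracket.bracket]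
  lie_self x := by ext <;> simp [Bracket.bracket]
  leibniz_lie x y z := by ext <;> simp [Bracket.bracket]

instance prodLieAlgebra {L : Type*} [LieRing L] [LieAlgebra ℝ L] : LieAlgebra ℝ (L × L) where
  lie_smul t x y := by ext <;> simp [Bracket.bracket]

/-! The identity `N = 0` already fails for every endomorphism `A` of `g`, whether or not
`A² = -1`. Evaluated on `(v, 0)` and `(w, 0)` and projected to the first factor, the identity for
`𝒥` on `g × g` becomes the identity for `A = fst ∘ 𝒥 ∘ inl` on `g`. Let `M` be the matrix of `A` in
the basis `b`. The `b 2`-coordinate of `N(b 0, b 1)` is `-(M 2 0)²`, so `A (b 0)` lies in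
`[g, g] = span {b 0, b 1}`. If `A (b 0) = λ • b 0`, the `b 0`-coordinate of `N(b 0, b 2)` reads
`1 + λ² = 0`; otherwise cancelling `M 1 0 ≠ 0` from three further coordinates determines
`M 2 1`, `M 1 1` and `M 2 2`, after which the `b 0`-coordinates of `N(b 0, b 2)` and `N(b 1, b 2)`
add up to `2 = 0`. -/

def nijenhuis {R L : Type*} [Semiring R] [LieRing L] [Module R L] (A : L →ₗ[R] L) (v w : L) : L :=
  ⁅v, w⁆ + A ⁅A v, w⁆ + A ⁅v, A w⁆ - ⁅A v, A w⁆

theorem nijenhuis_fst_comp_inl {R L : Type*} [Semiring R] [LieRing L] [Module R L]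
    {J : L × L →ₗ[R] L × L} (hJ : ∀ x y, nijenhuis J x y = 0) (v w : L) :
    nijenhuis (LinearMap.fst R L L ∘ₗ J ∘ₗ LinearMap.inl R L L) v w = 0 := by
  simpa [nijenhuis] using congrArg Prod.fst (hJ (v, 0) (w, 0))

theorem Module.Basis.repr_linearMap_apply {ι R M : Type*} [Fintype ι] [DecidableEq ι]
    [CommSemiring R] [AddCommMonoid M] [Module R M] (b : Module.Basis ι R M) (A : M →ₗ[R] M)
    (x : M) (k : ι) :
    b.repr (A x) k = ∑ l, LinearMap.toMatrix b b A k l * b.repr x l := by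
  rw [← LinearMap.toMatrix_mulVec_repr b b A x]
  rfl

section

variable {g : Type*} [LieRing g] [LieAlgebra ℝ g] (b : Module.Basis (Fin 3) ℝ g)

theorem lie_eq_of_basis (h13 : ⁅b 0, b 2⁆ = b 0) (h23 : ⁅b 1, b 2⁆ = b 0 + b 1)
    (h12 : ⁅b 0, b 1⁆ = 0) (v w : g) :
    ⁅v, w⁆ = (b.repr v 0 * b.repr w 2 - b.repr v 2 * b.repr w 0 + b.repr v 1 * b.repr w 2
        - b.repr v 2 * b.repr w 1) • b 0
      + (b.repr v 1 * b.repr w 2 - b.repr v 2 * b.repr w 1) • b 1 := by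
  conv_lhs => rw [← b.sum_repr v, ← b.sum_repr w]
  simp only [Fin.sum_univ_three, add_lie, lie_add, smul_lie, lie_smul, lie_self, h12, h13, h23,
    ← lie_skew (b 1) (b 0), ← lie_skew (b 2) (b 0), ← lie_skew (b 2) (b 1)]
  module

theorem not_forall_nijenhuis_eq_zero (h13 : ⁅b 0, b 2⁆ = b 0) (h23 : ⁅b 1, b 2⁆ = b 0 + b 1)
    (h12 : ⁅b 0, b 1⁆ = 0) (A : g →ₗ[ℝ] g) : ¬ ∀ v w, nijenhuis A v w = 0 := by
  intro hA
  have coord (i j k : Fin 3) := congrArg (fun x => b.repr x k) (hA (b i) (b j))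
  have e012 := coord 0 1 2
  have e010 := coord 0 1 0
  have e020 := coord 0 2 0
  have e021 := coord 0 2 1
  have e121 := coord 1 2 1
  have e120 := coord 1 2 0
  simp only [nijenhuis, lie_eq_of_basis b h13 h23 h12, b.repr_linearMap_apply A,
    Fin.sum_univ_three, Module.Basis.repr_self, Finsupp.single_eq_same, ne_eq, Fin.reduceEq,
    not_false_eq_true, Finsupp.single_eq_of_ne, map_add, map_sub, map_smul, map_zero,
    Finsupp.coe_add, Finsupp.coe_sub, Finsupp.coe_smul, Finsupp.coe_zero,
    Pi.add_apply, Pi.sub_apply, Pi.smul_apply, Pi.zero_apply,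
    smul_eq_mul] at e012 e010 e020 e021 e121 e120
  generalize LinearMap.toMatrix b b A = M at e012 e010 e020 e021 e121 e120
  have hM20 : M 2 0 = 0 := mul_self_eq_zero.mp (by linear_combination -e012)
  rw [hM20] at e010 e020 e021
  rcases eq_or_ne (M 1 0) 0 with hM10 | hM10
  · rw [hM10] at e020
    exact absurd (by linear_combination e020 : M 0 0 ^ 2 + 1 = 0) (by positivity)
  have hM21 : M 2 1 = 0 := mul_right_injective₀ hM10 (by linear_combination -e010)
  have hM11 : M 1 1 = -M 0 0 - M 1 0 :=
    eq_sub_of_add_eq' (mul_right_injective₀ hM10 (by linear_combination e021))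
  rw [hM21, hM11] at e121 e120
  have hM22 : M 2 2 = 0 := mul_right_injective₀ hM10 (by linear_combination (e121 - e020) / 2)
  rw [hM22] at e120 e020
  exact two_ne_zero (by linear_combination e020 + e120 : (2 : ℝ) = 0)

end

theorem bianchi5_no_complex_structure {g : Type*} [LieRing g] [LieAlgebra ℝ g]
    (b : Module.Basis (Fin 3) ℝ g) 
    (h13 : ⁅b 0, b 2⁆ = b 0) (h23 : ⁅b 1, b 2⁆ = b 0 + b 1) (h12 : ⁅b 0, b 1⁆ = 0) :
    ¬ ∃ 𝒥 : (g × g) →ₗ[ℝ] (g × g), (∀ x, 𝒥 (𝒥 x) = -x) ∧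
      ∀ x y : g × g,
        ⁅x, y⁆ + 𝒥 ⁅𝒥 x, y⁆ + 𝒥 ⁅x, 𝒥 y⁆ - ⁅𝒥 x, 𝒥 y⁆ = 0 := by
  rintro ⟨J, -, hJ⟩
  exact not_forall_nijenhuis_eq_zero b h13 h23 h12 _ (nijenhuis_fst_comp_inl hJ)
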